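/- arXiv:2006.08090 — 2 statements merged into one kernel-verified Lean document; each statement's English description precedes it below -/
import Mathlib

section
/- For every n ∈ ℕ and every d-dimensional nucleus ω on H, the map ω′ : ℤ^d → bounded operators on H defined by ω′(x) = ∑_{ε ∈ Λ^d} C_n^{(ε)} ω(x − ε) C_n^{(ε)} is again a d-dimensional nucleus on H; that is, each ω′(x) is a positive trace-class operator and ∑_{x ∈ ℤ^d} Tr[ω′(x)] = 1. (This defines the mapping 𝔍_n^{(d)} on the set of d-dimensional nucleuses.) -/
/- Common setup: quantum Bernoulli noises on `ℋ = ℓ²(Γ)`, `Γ` = finite subsets of `ℕ`. -/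

noncomputable section

open ContinuousLinearMap Filter

/-- The space `ℋ = ℓ²(Γ)` of square-integrable Bernoulli functionals,
where `Γ` is the set of finite subsets of `ℕ`. -/
abbrev ℋ : Type := lp (fun _ : Finset ℕ => ℂ) 2

/-- The canonical orthonormal basis `{Z_σ : σ ∈ Γ}` of `ℋ`. -/
def Z (σ : Finset ℕ) : ℋ := lp.single 2 σ 1

/-- `QBN a` says that `a k` is the annihilation operator `∂_k` acting on Bernoulli
functionals: `∂_k Z_σ = 1_σ(k) Z_{σ\k}` and `∂_k* Z_σ = (1 - 1_σ(k)) Z_{σ∪k}`. -/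
def QBN (a : ℕ → ℋ →L[ℂ] ℋ) : Prop :=
  (∀ (k : ℕ) (σ : Finset ℕ), a k (Z σ) = if k ∈ σ then Z (σ.erase k) else 0) ∧
  (∀ (k : ℕ) (σ : Finset ℕ), adjoint (a k) (Z σ) = if k ∈ σ then 0 else Z (insert k σ))

/-- `L_n = (∂_n* + ∂_n - I)/2`. -/
def Lop (a : ℕ → ℋ →L[ℂ] ℋ) (n : ℕ) : ℋ →L[ℂ] ℋ := (2 : ℂ)⁻¹ • (adjoint (a n) + a n - 1)

/-- `R_n = (∂_n* + ∂_n + I)/2`. -/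
def Rop (a : ℕ → ℋ →L[ℂ] ℋ) (n : ℕ) : ℋ →L[ℂ] ℋ := (2 : ℂ)⁻¹ • (adjoint (a n) + a n + 1)

/-- `Λ = {-1, 1} ⊆ ℤ`. -/
def Lam : Finset ℤ := {-1, 1}

/-- `Λ^d`, as a finite set of vectors in `ℤ^d`. -/
def LamD (d : ℕ) : Finset (Fin d → ℤ) := Fintype.piFinset fun _ => Lam

/-- `B_n^{(ε)}`: equals `L_n` if `ε = -1` and `R_n` if `ε = +1`. -/
def Bop (a : ℕ → ℋ →L[ℂ] ℋ) (n : ℕ) (e : ℤ) : ℋ →L[ℂ] ℋ :=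
  if e = -1 then Lop a n else Rop a n

/-- A characterization of the `d`-fold Hilbert-space tensor power of `Hs`:
`tpv` is the multilinear map `(u_1, …, u_d) ↦ u_1 ⊗ ⋯ ⊗ u_d`, which satisfies
`⟪⊗u_j, ⊗v_j⟫ = ∏ ⟪u_j, v_j⟫` and has dense span, and `tp` sends a `d`-tuple of bounded
operators to their tensor product operator, i.e. `(⊗A_j)(⊗u_j) = ⊗(A_j u_j)`. -/
def IsTensorD {Hs : Type} [NormedAddCommGroup Hs] [InnerProductSpace ℂ Hs]
    {d : ℕ} {Hd : Type} [NormedAddCommGroup Hd] [InnerProductSpace ℂ Hd]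
    (tpv : MultilinearMap ℂ (fun _ : Fin d => Hs) Hd)
    (tp : (Fin d → Hs →L[ℂ] Hs) → (Hd →L[ℂ] Hd)) : Prop :=
  (∀ u v : Fin d → Hs, (@inner ℂ _ _ (tpv u) (tpv v)) = ∏ j, (@inner ℂ _ _ (u j) (v j))) ∧
  ((Submodule.span ℂ (Set.range fun u => tpv u)).topologicalClosure = ⊤) ∧
  (∀ (A : Fin d → Hs →L[ℂ] Hs) (u : Fin d → Hs), tp A (tpv u) = tpv fun j => A j (u j))

/-- Conjugation of an operator by a unitary isomorphism `K`: `T ↦ K T K⁻¹`. -/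
def conjK {Hs Hd : Type} [NormedAddCommGroup Hs] [InnerProductSpace ℂ Hs]
    [NormedAddCommGroup Hd] [InnerProductSpace ℂ Hd]
    (K : Hd ≃ₗᵢ[ℂ] Hs) (T : Hd →L[ℂ] Hd) : Hs →L[ℂ] Hs :=
  K.toLinearIsometry.toContinuousLinearMap ∘L T ∘L K.symm.toLinearIsometry.toContinuousLinearMap

/-- `C_n^{(ε)} = K (B_n^{(ε_1)} ⊗ ⋯ ⊗ B_n^{(ε_d)}) K⁻¹` for `ε ∈ Λ^d`. -/
def Cop {d : ℕ} {Hd : Type} [NormedAddCommGroup Hd] [InnerProductSpace ℂ Hd]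
    (a : ℕ → ℋ →L[ℂ] ℋ) (tp : (Fin d → ℋ →L[ℂ] ℋ) → (Hd →L[ℂ] Hd))
    (K : Hd ≃ₗᵢ[ℂ] ℋ) (n : ℕ) (v : Fin d → ℤ) : ℋ →L[ℂ] ℋ :=
  conjK K (tp fun j => Bop a n (v j))

/-- The trace of an operator computed relative to an orthonormal basis `b`:
`Tr T = ∑_i Re ⟪b i, T (b i)⟫` (for positive operators this is the genuine trace). -/
def trB {E : Type} [NormedAddCommGroup E] [InnerProductSpace ℂ E] {ι : Type}
    (b : ι → E) (T : E →L[ℂ] E) : ℝ :=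
  ∑' i, (@inner ℂ _ _ (b i) (T (b i))).re

/-- Finiteness (summability) of the trace of `T` relative to the orthonormal basis `b`;
for a positive operator `T` this says exactly that `T` is of trace class. -/
def HasFiniteTrace {E : Type} [NormedAddCommGroup E] [InnerProductSpace ℂ E] {ι : Type}
    (b : ι → E) (T : E →L[ℂ] E) : Prop :=
  Summable fun i => (@inner ℂ _ _ (b i) (T (b i))).re

/-- The trace on `ℋ`, computed in the canonical ONB `{Z_σ}`. -/
def trH : (ℋ →L[ℂ] ℋ) → ℝ := trB Z

/-- A nucleus with site space `X` on a Hilbert space with orthonormal basis `b`: a family of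
positive trace-class operators `ω x` with `∑_x Tr[ω x] = 1`. -/
def IsNucleusOn {E : Type} [NormedAddCommGroup E] [InnerProductSpace ℂ E] [CompleteSpace E]
    {ι X : Type} (b : ι → E) (ω : X → E →L[ℂ] E) : Prop :=
  (∀ x, (ω x).IsPositive) ∧ (∀ x, HasFiniteTrace b (ω x)) ∧ HasSum (fun x => trB b (ω x)) 1

/-- The one-dimensional map `𝔍_n`: `(𝔍_n ρ)(x) = L_n ρ(x+1) L_n + R_n ρ(x-1) R_n`. -/
def Jmap1 (a : ℕ → ℋ →L[ℂ] ℋ) (n : ℕ) (ρ : ℤ → ℋ →L[ℂ] ℋ) : ℤ → ℋ →L[ℂ] ℋ :=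
  fun x => Lop a n * ρ (x + 1) * Lop a n + Rop a n * ρ (x - 1) * Rop a n

/-- The `d`-dimensional map `𝔍_n^{(d)}`:
`(𝔍_n^{(d)} ω)(x) = ∑_{ε ∈ Λ^d} C_n^{(ε)} ω(x-ε) C_n^{(ε)}`. -/
def JmapD {d : ℕ} {Hd : Type} [NormedAddCommGroup Hd] [InnerProductSpace ℂ Hd]
    (a : ℕ → ℋ →L[ℂ] ℋ) (tp : (Fin d → ℋ →L[ℂ] ℋ) → (Hd →L[ℂ] Hd)) (K : Hd ≃ₗᵢ[ℂ] ℋ)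
    (n : ℕ) (ω : (Fin d → ℤ) → ℋ →L[ℂ] ℋ) : (Fin d → ℤ) → ℋ →L[ℂ] ℋ :=
  fun x => ∑ v ∈ LamD d, Cop a tp K n v * ω (x - v) * Cop a tp K n v

/-- The sequence `ρ⁽⁰⁾ = ρ`, `ρ⁽ⁿ⁺¹⁾ = 𝔍_n ρ⁽ⁿ⁾` generated by `ρ` and `(𝔍_n)`. -/
def seqJ (a : ℕ → ℋ →L[ℂ] ℋ) (ρ : ℤ → ℋ →L[ℂ] ℋ) : ℕ → ℤ → ℋ →L[ℂ] ℋ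
  | 0 => ρ
  | n + 1 => Jmap1 a n (seqJ a ρ n)

/-- Regularity of a 1-dimensional nucleus `ρ`:
`lim_n ∑_x e^{itx/√n} Tr[ρ⁽ⁿ⁾(x)] = e^{-t²/2}` for every real `t`. -/
def Regular (a : ℕ → ℋ →L[ℂ] ℋ) (ρ : ℤ → ℋ →L[ℂ] ℋ) : Prop :=
  ∀ t : ℝ, Tendsto (fun n : ℕ => ∑' x : ℤ,
      Complex.exp (Complex.I * (t : ℂ) * (x : ℂ) / (Real.sqrt n : ℂ)) * (trH (seqJ a ρ n x) : ℂ))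
    atTop (nhds (Complex.exp (-(t : ℂ) ^ 2 / 2)))

/-- The rank-one (Dirac) operator `|u⟩⟨v| : w ↦ ⟪v, w⟫ u`. -/
def dyad {E : Type} [NormedAddCommGroup E] [InnerProductSpace ℂ E] (u v : E) : E →L[ℂ] E :=
  (toSpanSingleton ℂ u).comp (innerSL ℂ v)

/-- `ℓ²(ℤ^d)`. -/
abbrev l2Z (d : ℕ) : Type := lp (fun _ : Fin d → ℤ => ℂ) 2

/-- The canonical orthonormal basis `{δ_x : x ∈ ℤ^d}` of `ℓ²(ℤ^d)`. -/
def deltaV {d : ℕ} (x : Fin d → ℤ) : l2Z d := lp.single 2 x 1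

/-- A characterization of the Hilbert-space tensor product `E = ℓ²(ℤ^d) ⊗ Hs`:
`tv` is the bilinear map `(f, u) ↦ f ⊗ u`, with `⟪f⊗u, g⊗v⟫ = ⟪f,g⟫⟪u,v⟫` and dense span,
and `top2` sends a pair of bounded operators to their tensor product operator:
`(A ⊗ B)(f ⊗ u) = (A f) ⊗ (B u)`. -/
def IsTensor2 {d : ℕ} {Hs E : Type} [NormedAddCommGroup Hs] [InnerProductSpace ℂ Hs]
    [NormedAddCommGroup E] [InnerProductSpace ℂ E]
    (tv : l2Z d →ₗ[ℂ] Hs →ₗ[ℂ] E)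
    (top2 : (l2Z d →L[ℂ] l2Z d) → (Hs →L[ℂ] Hs) → (E →L[ℂ] E)) : Prop :=
  (∀ (f g : l2Z d) (u v : Hs),
      (@inner ℂ _ _ (tv f u) (tv g v)) = (@inner ℂ _ _ f g) * (@inner ℂ _ _ u v)) ∧
  ((Submodule.span ℂ {z : E | ∃ f u, z = tv f u}).topologicalClosure = ⊤) ∧
  (∀ (A : l2Z d →L[ℂ] l2Z d) (B : Hs →L[ℂ] Hs) (f : l2Z d) (u : Hs),
      top2 A B (tv f u) = tv (A f) (B u))

/-- The orthonormal basis `{δ_x ⊗ b_κ}` of the tensor product `ℓ²(ℤ^d) ⊗ Hs` induced by the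
canonical basis of `ℓ²(ℤ^d)` and an orthonormal basis `b` of `Hs`. -/
def tbasis {d : ℕ} {Hs E : Type} [NormedAddCommGroup Hs] [InnerProductSpace ℂ Hs]
    [NormedAddCommGroup E] [InnerProductSpace ℂ E]
    (tv : l2Z d →ₗ[ℂ] Hs →ₗ[ℂ] E) {κ : Type} (b : κ → Hs) : (Fin d → ℤ) × κ → E :=
  fun p => tv (deltaV p.1) (b p.2)

/-- The Kraus operators `M^{(n)}_{x,y} = |δ_x⟩⟨δ_y| ⊗ C_n^{(x-y)}` if `x - y ∈ Λ^d`, else `0`. -/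
def Mop {d : ℕ} {Hd E : Type} [NormedAddCommGroup Hd] [InnerProductSpace ℂ Hd]
    [NormedAddCommGroup E] [InnerProductSpace ℂ E]
    (a : ℕ → ℋ →L[ℂ] ℋ) (tp : (Fin d → ℋ →L[ℂ] ℋ) → (Hd →L[ℂ] Hd)) (K : Hd ≃ₗᵢ[ℂ] ℋ)
    (top2 : (l2Z d →L[ℂ] l2Z d) → (ℋ →L[ℂ] ℋ) → (E →L[ℂ] E))
    (n : ℕ) (x y : Fin d → ℤ) : E →L[ℂ] E :=
  if x - y ∈ LamD d then top2 (dyad (deltaV x) (deltaV y)) (Cop a tp K n (x - y)) else 0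

/-- The 1-dimensional nucleus `ρ_σ` concentrated at `0` with value `|Z_σ⟩⟨Z_σ|`. -/
def rhoPoint (σ : Finset ℕ) : ℤ → ℋ →L[ℂ] ℋ := fun x => if x = 0 then dyad (Z σ) (Z σ) else 0

/-- `ℓ²(ℤ^d; ℋ)`, the space of square-summable `ℋ`-valued functions on `ℤ^d`. -/
abbrev l2ZH (d : ℕ) : Type := lp (fun _ : Fin d → ℤ => ℋ) 2

/-!
Each `C_n^{(ε)}` is self-adjoint and `∑_ε (C_n^{(ε)})² = I`: the operator `∂_n* + ∂_n` is a
self-adjoint involution, so `L_n² + R_n² = I`, and this identity passes through the tensor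
power and the unitary conjugation by `K`. Hence `ω ↦ ∑_ε C_ε ω(· - ε) C_ε` is a trace preserving
Kraus map. Writing `ω(y) = S* S`, `Tr[C_ε ω(y) C_ε] = ‖S C_ε‖²_HS = ‖C_ε S*‖²_HS`, and summing over
`ε` gives `‖S*‖²_HS = Tr[ω(y)]`. Traces are taken in `[0, ∞]`, so all sums can be exchanged
before any summability is known; the shift `x ↦ x - ε` is a bijection of `ℤ^d`.
-/

open scoped ENNReal InnerProductSpace

section HilbertSchmidt

variable {ι κ E F : Type*} [NormedAddCommGroup E] [InnerProductSpace ℂ E]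
  [NormedAddCommGroup F] [InnerProductSpace ℂ F]

theorem HilbertBasis.ext_continuousLinearMap (b : HilbertBasis ι ℂ E) {T S : E →L[ℂ] F}
    (h : ∀ i, T (b i) = S (b i)) : T = S :=
  ext_on (Submodule.dense_iff_topologicalClosure_eq_top.mpr b.dense_span)
    (Set.forall_mem_range.mpr h)

theorem HilbertBasis.tsum_ofReal_norm_inner_sq (b : HilbertBasis ι ℂ E) (x : E) :
    ∑' i, ENNReal.ofReal (‖⟪b i, x⟫_ℂ‖ ^ 2) = ENNReal.ofReal (‖x‖ ^ 2) := by
  have h := lp.hasSum_norm (p := 2) (by norm_num) (b.repr x)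
  simp only [ENNReal.toReal_ofNat, Real.rpow_two, b.repr_apply_apply,
    LinearIsometryEquiv.norm_map] at h
  rw [← ENNReal.ofReal_tsum_of_nonneg (fun _ => sq_nonneg _) h.summable, h.tsum_eq]

variable [CompleteSpace E] [CompleteSpace F]

/-- Both sides are the Hilbert–Schmidt norm `∑ |⟪c j, A (b i)⟫|²` summed in the other order. -/
theorem HilbertBasis.tsum_ofReal_norm_adjoint_apply_sq (b : HilbertBasis ι ℂ E)
    (c : HilbertBasis κ ℂ F) (A : E →L[ℂ] F) :
    ∑' j, ENNReal.ofReal (‖adjoint A (c j)‖ ^ 2) = ∑' i, ENNReal.ofReal (‖A (b i)‖ ^ 2) := by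
  simp_rw [← b.tsum_ofReal_norm_inner_sq, ← c.tsum_ofReal_norm_inner_sq (A _),
    adjoint_inner_right, norm_inner_symm (A _)]
  exact ENNReal.tsum_comm

end HilbertSchmidt

section PositiveTrace

variable {ι κ E : Type*} [NormedAddCommGroup E] [InnerProductSpace ℂ E]

/-- `∑ ⟪b i, T (b i)⟫` in `[0, ∞]`: the trace only for positive `T`, since `ofReal` truncates
negative terms to `0`. -/
def ennTrace (b : ι → E) (T : E →L[ℂ] E) : ℝ≥0∞ :=
  ∑' i, ENNReal.ofReal (⟪b i, T (b i)⟫_ℂ).re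

theorem ennTrace_sum (b : ι → E) {s : Finset κ} {T : κ → E →L[ℂ] E}
    (hT : ∀ k ∈ s, (T k).IsPositive) : ennTrace b (∑ k ∈ s, T k) = ∑ k ∈ s, ennTrace b (T k) := by
  simp only [ennTrace]
  rw [← Summable.tsum_finsetSum fun _ _ => ENNReal.summable]
  refine tsum_congr fun i => ?_
  rw [← ENNReal.ofReal_sum_of_nonneg (f := fun k => (⟪b i, T k (b i)⟫_ℂ).re)
    fun k hk => (hT k hk).re_inner_nonneg_right (b i), sum_apply, inner_sum, Complex.re_sum]

variable [CompleteSpace E]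

theorem ennTrace_star_mul_self (b : ι → E) (A : E →L[ℂ] E) :
    ennTrace b (star A * A) = ∑' i, ENNReal.ofReal (‖A (b i)‖ ^ 2) := by
  simp_rw [apply_norm_sq_eq_inner_adjoint_right]
  rfl

theorem sum_norm_star_apply_sq {s : Finset κ} {C : κ → E →L[ℂ] E}
    (hC : ∑ k ∈ s, C k * star (C k) = 1) (x : E) :
    ∑ k ∈ s, ‖star (C k) x‖ ^ 2 = ‖x‖ ^ 2 := by
  calc ∑ k ∈ s, ‖star (C k) x‖ ^ 2 = (⟪x, (∑ k ∈ s, C k * star (C k)) x⟫_ℂ).re := by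
        simp only [apply_norm_sq_eq_inner_adjoint_right, star_eq_adjoint, adjoint_adjoint,
          sum_apply, inner_sum, Complex.re_sum]
        rfl
    _ = ‖x‖ ^ 2 := by
        rw [hC, one_apply_eq_self, inner_self_eq_norm_sq_to_K]
        norm_cast

theorem HilbertBasis.sum_ennTrace_conj (b : HilbertBasis ι ℂ E) {s : Finset κ}
    {C : κ → E →L[ℂ] E} (hC : ∑ k ∈ s, C k * star (C k) = 1) {T : E →L[ℂ] E}
    (hT : T.IsPositive) :
    ∑ k ∈ s, ennTrace b (star (C k) * T * C k) = ennTrace b T := by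
  obtain ⟨S, rfl⟩ :=
    CStarAlgebra.nonneg_iff_eq_star_mul_self.mp ((nonneg_iff_isPositive T).mpr hT)
  have hHS (A : E →L[ℂ] E) :
      ennTrace b (star A * A) = ∑' i, ENNReal.ofReal (‖star A (b i)‖ ^ 2) := by
    rw [ennTrace_star_mul_self, star_eq_adjoint, b.tsum_ofReal_norm_adjoint_apply_sq b]
  calc ∑ k ∈ s, ennTrace b (star (C k) * (star S * S) * C k)
      = ∑ k ∈ s, ∑' i, ENNReal.ofReal (‖star (C k) (star S (b i))‖ ^ 2) := by
        refine Finset.sum_congr rfl fun k _ => ?_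
        rw [show star (C k) * (star S * S) * C k = star (S * C k) * (S * C k) by
          simp only [star_mul, mul_assoc], hHS, star_mul]
        rfl
    _ = ∑' i, ENNReal.ofReal (‖star S (b i)‖ ^ 2) := by
        rw [← Summable.tsum_finsetSum fun _ _ => ENNReal.summable]
        refine tsum_congr fun i => ?_
        rw [← ENNReal.ofReal_sum_of_nonneg fun _ _ => sq_nonneg _, sum_norm_star_apply_sq hC]
    _ = ennTrace b (star S * S) := (hHS S).symm

end PositiveTrace

theorem hasSum_iff_tsum_ofReal_eq {ι : Type*} {f : ι → ℝ} (hf : ∀ i, 0 ≤ f i) {r : ℝ}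
    (hr : 0 ≤ r) : HasSum f r ↔ ∑' i, ENNReal.ofReal (f i) = ENNReal.ofReal r := by
  refine ⟨fun h => by rw [← ENNReal.ofReal_tsum_of_nonneg hf h.summable, h.tsum_eq], fun h => ?_⟩
  have hsum : Summable f := (ENNReal.summable_toReal (h ▸ ENNReal.ofReal_ne_top)).congr
    fun i => ENNReal.toReal_ofReal (hf i)
  rw [← ENNReal.ofReal_tsum_of_nonneg hf hsum,
    ENNReal.ofReal_eq_ofReal_iff (tsum_nonneg hf) hr] at h
  exact h ▸ hsum.hasSum

section Nucleus

variable {ι X E : Type} [NormedAddCommGroup E] [InnerProductSpace ℂ E]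

theorem ofReal_trB {b : ι → E} {T : E →L[ℂ] E} (hT : T.IsPositive) (h : HasFiniteTrace b T) :
    ENNReal.ofReal (trB b T) = ennTrace b T :=
  ENNReal.ofReal_tsum_of_nonneg (fun i => hT.re_inner_nonneg_right (b i)) h

theorem hasFiniteTrace_of_ennTrace_ne_top {b : ι → E} {T : E →L[ℂ] E} (hT : T.IsPositive)
    (h : ennTrace b T ≠ ⊤) : HasFiniteTrace b T :=
  (ENNReal.summable_toReal h).congr fun i =>
    ENNReal.toReal_ofReal (hT.re_inner_nonneg_right (b i))

variable [CompleteSpace E]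

theorem isNucleusOn_iff {b : ι → E} {ω : X → E →L[ℂ] E} :
    IsNucleusOn b ω ↔ (∀ x, (ω x).IsPositive) ∧ ∑' x, ennTrace b (ω x) = 1 := by
  refine ⟨fun ⟨hpos, hfin, hsum⟩ => ⟨hpos, ?_⟩, fun ⟨hpos, hsum⟩ => ?_⟩
  · rw [← ENNReal.ofReal_one, ← (hasSum_iff_tsum_ofReal_eq _ zero_le_one).mp hsum]
    · exact tsum_congr fun x => (ofReal_trB (hpos x) (hfin x)).symm
    · exact fun x => tsum_nonneg fun i => (hpos x).re_inner_nonneg_right (b i)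
  have hfin : ∀ x, HasFiniteTrace b (ω x) := fun x =>
    hasFiniteTrace_of_ennTrace_ne_top (hpos x)
      (ne_top_of_le_ne_top ENNReal.one_ne_top (hsum ▸ ENNReal.le_tsum x))
  refine ⟨hpos, hfin, (hasSum_iff_tsum_ofReal_eq ?_ zero_le_one).mpr ?_⟩
  · exact fun x => tsum_nonneg fun i => (hpos x).re_inner_nonneg_right (b i)
  · simp only [ofReal_trB (hpos _) (hfin _), hsum, ENNReal.ofReal_one]

theorem IsNucleusOn.sum_conj [AddGroup X] {b : HilbertBasis ι ℂ E} {ω : X → E →L[ℂ] E}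
    (hω : IsNucleusOn b ω) {s : Finset X} {C : X → E →L[ℂ] E}
    (hC : ∑ v ∈ s, C v * star (C v) = 1) :
    IsNucleusOn b fun x => ∑ v ∈ s, star (C v) * ω (x - v) * C v := by
  obtain ⟨hpos, hsum⟩ := isNucleusOn_iff.mp hω
  have hconj : ∀ v y, (star (C v) * ω y * C v).IsPositive := fun v y =>
    (hpos y).adjoint_conj (C v)
  refine isNucleusOn_iff.mpr ⟨fun x => isPositive_sum s fun v _ => hconj v (x - v), ?_⟩
  calc ∑' x, ennTrace b (∑ v ∈ s, star (C v) * ω (x - v) * C v)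
      = ∑ v ∈ s, ∑' x, ennTrace b (star (C v) * ω (x - v) * C v) := by
        simp only [ennTrace_sum _ fun v _ => hconj _ _]
        exact Summable.tsum_finsetSum fun _ _ => ENNReal.summable
    _ = ∑ v ∈ s, ∑' y, ennTrace b (star (C v) * ω y * C v) :=
        Finset.sum_congr rfl fun v _ =>
          (Equiv.subRight v).tsum_eq fun y => ennTrace b (star (C v) * ω y * C v)
    _ = ∑' y, ∑ v ∈ s, ennTrace b (star (C v) * ω y * C v) :=
        (Summable.tsum_finsetSum fun _ _ => ENNReal.summable).symm
    _ = 1 := by simp only [b.sum_ennTrace_conj hC (hpos _), hsum]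

end Nucleus

section Bernoulli

variable {a : ℕ → ℋ →L[ℂ] ℋ}

def hilbertBasisZ : HilbertBasis (Finset ℕ) ℂ ℋ := ⟨LinearIsometryEquiv.refl ℂ ℋ⟩

theorem coe_hilbertBasisZ : ⇑hilbertBasisZ = Z :=
  funext fun σ => (hilbertBasisZ.repr_symm_single σ).symm

theorem QBN.adjoint_add_apply (ha : QBN a) (n : ℕ) (σ : Finset ℕ) :
    (adjoint (a n) + a n) (Z σ) = if n ∈ σ then Z (σ.erase n) else Z (insert n σ) := by
  rw [add_apply, ha.1 n σ, ha.2 n σ]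
  split_ifs <;> simp

/-- `∂_n* + ∂_n` flips the membership of `n`, so it is an involution. -/
theorem QBN.adjoint_add_mul_self (ha : QBN a) (n : ℕ) :
    (adjoint (a n) + a n) * (adjoint (a n) + a n) = 1 := by
  refine hilbertBasisZ.ext_continuousLinearMap fun σ => ?_
  rw [coe_hilbertBasisZ, mul_apply_eq_comp, one_apply_eq_self, ha.adjoint_add_apply]
  by_cases h : n ∈ σ
  · rw [if_pos h, ha.adjoint_add_apply, if_neg (Finset.notMem_erase n σ), Finset.insert_erase h]
  · rw [if_neg h, ha.adjoint_add_apply, if_pos (Finset.mem_insert_self n σ),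
      Finset.erase_insert h]

theorem QBN.Lop_mul_self_add_Rop_mul_self (ha : QBN a) (n : ℕ) :
    Lop a n * Lop a n + Rop a n * Rop a n = 1 := by
  have hS := ha.adjoint_add_mul_self n
  set S := adjoint (a n) + a n
  have h : (S - 1) * (S - 1) + (S + 1) * (S + 1) = (2 : ℂ) • (S * S + 1) := by
    rw [two_smul]; noncomm_ring
  rw [Lop, Rop, smul_mul_smul_comm, smul_mul_smul_comm, ← smul_add, h, hS, smul_smul, ← two_smul ℂ,
    smul_smul]
  norm_num

theorem isSelfAdjoint_Bop (n : ℕ) (e : ℤ) : IsSelfAdjoint (Bop a n e) := by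
  have h2 : IsSelfAdjoint ((2 : ℂ)⁻¹) := by simp [IsSelfAdjoint]
  have hS : IsSelfAdjoint (adjoint (a n) + a n) := .star_add_self (a n)
  have h1 := IsSelfAdjoint.one (ℋ →L[ℂ] ℋ)
  rw [Bop]
  split_ifs
  · exact h2.smul (hS.sub h1)
  · exact h2.smul (hS.add h1)

theorem QBN.sum_Bop_mul_self (ha : QBN a) (n : ℕ) : ∑ e ∈ Lam, Bop a n e * Bop a n e = 1 := by
  rw [Lam, Finset.sum_pair (by decide), Bop, Bop, if_pos rfl, if_neg (by decide),
    ha.Lop_mul_self_add_Rop_mul_self]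

end Bernoulli

section TensorPower

variable {Hs Hd : Type} [NormedAddCommGroup Hs] [InnerProductSpace ℂ Hs]
  [NormedAddCommGroup Hd] [InnerProductSpace ℂ Hd] {d : ℕ}
  {tpv : MultilinearMap ℂ (fun _ : Fin d => Hs) Hd} {tp : (Fin d → Hs →L[ℂ] Hs) → (Hd →L[ℂ] Hd)}

theorem IsTensorD.ext (htp : IsTensorD tpv tp) {F : Type*} [NormedAddCommGroup F]
    [NormedSpace ℂ F] {T S : Hd →L[ℂ] F} (h : ∀ u, T (tpv u) = S (tpv u)) : T = S :=
  ext_on (Submodule.dense_iff_topologicalClosure_eq_top.mpr htp.2.1) (Set.forall_mem_range.mpr h)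

theorem IsTensorD.eq_of_forall_inner (htp : IsTensorD tpv tp) {x y : Hd}
    (h : ∀ u, ⟪x, tpv u⟫_ℂ = ⟪y, tpv u⟫_ℂ) : x = y :=
  innerSL_inj.mp (htp.ext h)

theorem IsTensorD.tp_one (htp : IsTensorD tpv tp) : tp (fun _ => 1) = 1 :=
  htp.ext fun u => by rw [htp.2.2]; rfl

theorem IsTensorD.tp_mul (htp : IsTensorD tpv tp) (A B : Fin d → Hs →L[ℂ] Hs) :
    tp A * tp B = tp fun j => A j * B j :=
  htp.ext fun u => by simp only [mul_apply_eq_comp, htp.2.2]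

theorem IsTensorD.sum_piFinset (htp : IsTensorD tpv tp) {κ : Type*} (s : Fin d → Finset κ)
    (f : Fin d → κ → Hs →L[ℂ] Hs) :
    ∑ v ∈ Fintype.piFinset s, tp (fun j => f j (v j)) = tp fun j => ∑ e ∈ s j, f j e :=
  htp.ext fun u => by
    simp only [sum_apply, htp.2.2]
    exact (tpv.map_sum_finset (fun j e => f j e (u j)) s).symm

theorem IsTensorD.isSelfAdjoint_tp [CompleteSpace Hs] [CompleteSpace Hd]
    (htp : IsTensorD tpv tp) {A : Fin d → Hs →L[ℂ] Hs} (hA : ∀ j, IsSelfAdjoint (A j)) :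
    IsSelfAdjoint (tp A) := by
  refine (htp.ext fun u => htp.eq_of_forall_inner fun v => ?_ : adjoint (tp A) = tp A)
  simp only [adjoint_inner_left, htp.2.2, htp.1]
  exact Finset.prod_congr rfl fun j _ => by rw [← adjoint_inner_left, (hA j).adjoint_eq]

end TensorPower

section KrausOperators

variable {d : ℕ} {Hd : Type} [NormedAddCommGroup Hd] [InnerProductSpace ℂ Hd] [CompleteSpace Hd]
  {tpv : MultilinearMap ℂ (fun _ : Fin d => ℋ) Hd} {tp : (Fin d → ℋ →L[ℂ] ℋ) → (Hd →L[ℂ] Hd)}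
  {a : ℕ → ℋ →L[ℂ] ℋ}

theorem Cop_eq_conjStarAlgEquiv (K : Hd ≃ₗᵢ[ℂ] ℋ) (n : ℕ) (v : Fin d → ℤ) :
    Cop a tp K n v = K.conjStarAlgEquiv (tp fun j => Bop a n (v j)) :=
  rfl

theorem IsTensorD.isSelfAdjoint_Cop (htp : IsTensorD tpv tp) (K : Hd ≃ₗᵢ[ℂ] ℋ) (n : ℕ)
    (v : Fin d → ℤ) : IsSelfAdjoint (Cop a tp K n v) := by
  rw [Cop_eq_conjStarAlgEquiv]
  exact (htp.isSelfAdjoint_tp fun j => isSelfAdjoint_Bop n (v j)).map _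

theorem QBN.sum_Cop_mul_self (ha : QBN a) (htp : IsTensorD tpv tp) (K : Hd ≃ₗᵢ[ℂ] ℋ) (n : ℕ) :
    ∑ v ∈ LamD d, Cop a tp K n v * Cop a tp K n v = 1 := by
  simp only [Cop_eq_conjStarAlgEquiv, ← map_mul, ← map_sum, htp.tp_mul, LamD,
    htp.sum_piFinset _ fun _ e => Bop a n e * Bop a n e, ha.sum_Bop_mul_self, htp.tp_one, map_one]

end KrausOperators

theorem stmt6_general (a : ℕ → ℋ →L[ℂ] ℋ) (ha : QBN a)
    (d : ℕ)
    (Hd : Type) [NormedAddCommGroup Hd] [InnerProductSpace ℂ Hd] [CompleteSpace Hd]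
    (tpv : MultilinearMap ℂ (fun _ : Fin d => ℋ) Hd)
    (tp : (Fin d → ℋ →L[ℂ] ℋ) → (Hd →L[ℂ] Hd))
    (htp : IsTensorD tpv tp)
    (K : Hd ≃ₗᵢ[ℂ] ℋ) (n : ℕ)
    (ω : (Fin d → ℤ) → ℋ →L[ℂ] ℋ) (hω : IsNucleusOn Z ω) :
    IsNucleusOn Z (JmapD a tp K n ω) := by
  have hC : ∀ v, star (Cop a tp K n v) = Cop a tp K n v := fun v =>
    (htp.isSelfAdjoint_Cop K n v).star_eq
  have hJ : JmapD a tp K n ω =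
      fun x => ∑ v ∈ LamD d, star (Cop a tp K n v) * ω (x - v) * Cop a tp K n v := by
    simp only [hC]; rfl
  rw [hJ]
  rw [← coe_hilbertBasisZ] at hω ⊢
  exact hω.sum_conj (by simpa only [hC] using ha.sum_Cop_mul_self htp K n)

/-- For every `n` and every `d`-dimensional nucleus `ω` on `ℋ`, the map
`x ↦ ∑_{ε ∈ Λ^d} C_n^{(ε)} ω(x-ε) C_n^{(ε)}` is again a `d`-dimensional nucleus on `ℋ`;
this defines the mapping `𝔍_n^{(d)}`. -/
theorem stmt6 (a : ℕ → ℋ →L[ℂ] ℋ) (ha : QBN a)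
    (d : ℕ) (hd : 2 ≤ d)
    (Hd : Type) [NormedAddCommGroup Hd] [InnerProductSpace ℂ Hd] [CompleteSpace Hd]
    (tpv : MultilinearMap ℂ (fun _ : Fin d => ℋ) Hd)
    (tp : (Fin d → ℋ →L[ℂ] ℋ) → (Hd →L[ℂ] Hd))
    (htp : IsTensorD tpv tp)
    (K : Hd ≃ₗᵢ[ℂ] ℋ) (n : ℕ)
    (ω : (Fin d → ℤ) → ℋ →L[ℂ] ℋ) (hω : IsNucleusOn Z ω) :
    IsNucleusOn Z (JmapD a tp K n ω) :=
  stmt6_general a ha d Hd tpv tp htp K n ω hω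
end
end

section
/- Fix σ ∈ Γ, let ρ_σ be the 1-dimensional nucleus with ρ_σ(0) = |Z_σ⟩⟨Z_σ| and ρ_σ(x) = 0 for x ≠ 0, and let ρ^{(0)} = ρ_σ, ρ^{(n+1)} = 𝔍_n ρ^{(n)} for n ≥ 0. Then ρ_σ is regular: for every t ∈ ℝ, lim_{n→∞} ∑_{x ∈ ℤ} e^{i t x/√n} · Tr[ρ^{(n)}(x)] = e^{−t²/2}. -/
/- Common setup: quantum Bernoulli noises on `ℋ = ℓ²(Γ)`, `Γ` = finite subsets of `ℕ`. -/

noncomputable section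

open ContinuousLinearMap Filter

/-! Put `S_n = ∂_n* + ∂_n`, so that `S_n Z_γ = Z_{γ ∆ {n}}`, `L_n = (S_n - 1)/2` and
`R_n = (S_n + 1)/2`. Starting from the pure state `|Z_σ⟩⟨Z_σ|`, the `n`-th iterate is
`ρ⁽ⁿ⁾(x) = ∑ |w_ε⟩⟨w_ε|`, summed over the `±1`-paths `ε` of length `n` ending at `x`, where
`w_ε = B_{n-1}^{ε_{n-1}} ⋯ B_0^{ε_0} Z_σ`. The vector `w_ε` lies in the span of the `Z_γ` with
`γ` agreeing with `σ` above `n`; `S_n` is an isometry and `S_n w ⟂ w` on that span, so the step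
`w ↦ (S_n ± 1) w / 2` halves `‖w‖²` and `Tr |w_ε⟩⟨w_ε| = 2⁻ⁿ`. Thus `x ↦ Tr ρ⁽ⁿ⁾(x)` is the law
of the simple random walk, whose characteristic function at `t/√n` is `cos (t/√n) ^ n`, and
`n (cos (t/√n) - 1) → -t²/2`. -/

def ZBasis : HilbertBasis (Finset ℕ) ℂ ℋ := HilbertBasis.ofRepr (LinearIsometryEquiv.refl ℂ ℋ)

lemma coe_ZBasis : ⇑ZBasis = Z := by
  ext1 γ
  rw [← ZBasis.repr_symm_single]
  rfl

lemma inner_Z_Z (γ δ : Finset ℕ) : inner ℂ (Z γ) (Z δ) = if γ = δ then 1 else 0 := by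
  rw [← coe_ZBasis]; exact orthonormal_iff_ite.mp ZBasis.orthonormal γ δ

lemma ext_Z {T T' : ℋ →L[ℂ] ℋ} (h : ∀ γ, T (Z γ) = T' (Z γ)) : T = T' := by
  refine ContinuousLinearMap.ext_on (s := Set.range Z) ?_ ?_
  · rw [← coe_ZBasis, Submodule.dense_iff_topologicalClosure_eq_top]; exact ZBasis.dense_span
  · rintro _ ⟨γ, rfl⟩; exact h γ

lemma Finset.symmDiff_singleton {α : Type*} [DecidableEq α] (s : Finset α) (a : α) :
    symmDiff s {a} = if a ∈ s then s.erase a else insert a s := by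
  ext b
  by_cases hb : b = a <;> split_ifs <;> simp_all [Finset.mem_symmDiff]

def Sop (a : ℕ → ℋ →L[ℂ] ℋ) (n : ℕ) : ℋ →L[ℂ] ℋ := adjoint (a n) + a n

section
variable {a : ℕ → ℋ →L[ℂ] ℋ} (n : ℕ)

lemma Sop_Z (ha : QBN a) (γ : Finset ℕ) : Sop a n (Z γ) = Z (symmDiff γ {n}) := by
  rw [Finset.symmDiff_singleton, Sop, add_apply, ha.1, ha.2]
  split_ifs <;> simp

lemma isSelfAdjoint_Sop : IsSelfAdjoint (Sop a n) := by
  simp [Sop, IsSelfAdjoint, ContinuousLinearMap.star_eq_adjoint, add_comm]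

lemma Sop_mul_Sop (ha : QBN a) : Sop a n * Sop a n = 1 :=
  ext_Z fun γ => by simp [Sop_Z n ha, symmDiff_symmDiff_cancel_right]

lemma norm_Sop_apply (ha : QBN a) (u : ℋ) : ‖Sop a n u‖ = ‖u‖ := by
  refine (norm_map_iff_adjoint_comp_self _).mpr ?_ u
  rw [← ContinuousLinearMap.star_eq_adjoint, (isSelfAdjoint_Sop n).star_eq]
  exact Sop_mul_Sop n ha

end


lemma mul_dyad_mul_adjoint {E : Type} [NormedAddCommGroup E] [InnerProductSpace ℂ E]
    [CompleteSpace E] (T : E →L[ℂ] E) (u v : E) :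
    T * dyad u v * adjoint T = dyad (T u) (T v) := by
  ext w
  simp [dyad, adjoint_inner_right]

def stepOp (a : ℕ → ℋ →L[ℂ] ℋ) (n : ℕ) (b : Bool) : ℋ →L[ℂ] ℋ := if b then Rop a n else Lop a n

lemma isSelfAdjoint_stepOp (a : ℕ → ℋ →L[ℂ] ℋ) (n : ℕ) (b : Bool) :
    IsSelfAdjoint (stepOp a n b) := by
  have hS := isSelfAdjoint_Sop (a := a) n
  have h2 : IsSelfAdjoint (2⁻¹ : ℂ) := by simp [IsSelfAdjoint]
  cases b
  · exact h2.smul (hS.sub (.one _))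
  · exact h2.smul (hS.add (.one _))

lemma stepOp_dyad (a : ℕ → ℋ →L[ℂ] ℋ) (n : ℕ) (b : Bool) (u : ℋ) :
    stepOp a n b * dyad u u * stepOp a n b = dyad (stepOp a n b u) (stepOp a n b u) := by
  simpa only [(isSelfAdjoint_stepOp a n b).adjoint_eq] using
    mul_dyad_mul_adjoint (stepOp a n b) u u

def tailSpan (σ : Finset ℕ) (n : ℕ) : Submodule ℂ ℋ :=
  Submodule.span ℂ (Z '' {γ | ∀ k, n ≤ k → (k ∈ γ ↔ k ∈ σ)})

lemma tailSpan_le_succ (σ : Finset ℕ) (n : ℕ) : tailSpan σ n ≤ tailSpan σ (n + 1) :=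
  Submodule.span_mono (Set.image_mono fun _ hγ k hk => hγ k (by omega))

section
variable {a : ℕ → ℋ →L[ℂ] ℋ} {σ : Finset ℕ} {n : ℕ} {u : ℋ}

lemma Sop_mem_tailSpan (ha : QBN a) (hu : u ∈ tailSpan σ (n + 1)) :
    Sop a n u ∈ tailSpan σ (n + 1) := by
  suffices tailSpan σ (n + 1) ≤ (tailSpan σ (n + 1)).comap (Sop a n : ℋ →ₗ[ℂ] ℋ) from this hu
  refine Submodule.span_le.mpr ?_
  rintro _ ⟨γ, hγ, rfl⟩
  refine Submodule.subset_span ⟨symmDiff γ {n}, fun k hk => ?_, (Sop_Z n ha γ).symm⟩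
  have hkn : k ≠ n := by omega
  simp [Finset.mem_symmDiff, hkn, ← hγ k hk]

lemma inner_Sop_eq_zero (ha : QBN a) {v : ℋ} (hu : u ∈ tailSpan σ n) (hv : v ∈ tailSpan σ n) :
    inner ℂ u (Sop a n v) = 0 := by
  -- `S_n` flips whether `n ∈ γ`, while all `γ` indexing `tailSpan σ n` agree with `σ` at `n`.
  suffices tailSpan σ n ⟂ (tailSpan σ n).map (Sop a n : ℋ →ₗ[ℂ] ℋ) from
    this.inner_eq hu (Submodule.mem_map_of_mem hv)
  rw [tailSpan, Submodule.map_span, Submodule.isOrtho_span]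
  rintro _ ⟨γ, hγ, rfl⟩ _ ⟨_, ⟨δ, hδ, rfl⟩, rfl⟩
  rw [ContinuousLinearMap.coe_coe, Sop_Z n ha, inner_Z_Z, if_neg]
  rintro rfl
  have := hγ n le_rfl
  rw [Finset.mem_symmDiff, hδ n le_rfl] at this
  simp at this

lemma stepOp_mem_tailSpan (ha : QBN a) (b : Bool) (hu : u ∈ tailSpan σ n) :
    stepOp a n b u ∈ tailSpan σ (n + 1) := by
  have hu' := tailSpan_le_succ σ n hu
  have hSu := Sop_mem_tailSpan ha hu'
  cases b
  · exact Submodule.smul_mem _ _ (Submodule.sub_mem _ hSu hu')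
  · exact Submodule.smul_mem _ _ (Submodule.add_mem _ hSu hu')

lemma norm_stepOp_sq (ha : QBN a) (b : Bool) (hu : u ∈ tailSpan σ n) :
    ‖stepOp a n b u‖ ^ 2 = ‖u‖ ^ 2 / 2 := by
  have horth : inner ℂ (Sop a n u) u = 0 := by
    rw [← inner_conj_symm, inner_Sop_eq_zero ha hu hu, map_zero]
  have hL : stepOp a n false u = (2 : ℂ)⁻¹ • (Sop a n u - u) := rfl
  have hR : stepOp a n true u = (2 : ℂ)⁻¹ • (Sop a n u + u) := rfl
  cases b
  · rw [hL, norm_smul, mul_pow, @norm_sub_sq ℂ, horth, norm_Sop_apply n ha]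
    norm_num; ring
  · rw [hR, norm_smul, mul_pow, @norm_add_sq ℂ, horth, norm_Sop_apply n ha]
    norm_num; ring

end

lemma Fin.sum_univ_pi_snoc {M α : Type*} [AddCommMonoid M] [Fintype α] {n : ℕ}
    (f : (Fin (n + 1) → α) → M) : ∑ ε, f ε = ∑ ε : Fin n → α, ∑ b, f (Fin.snoc ε b) := by
  rw [← (Fin.snocEquiv fun _ => α).sum_comp, Fintype.sum_prod_type, Finset.sum_comm]
  rfl

def walkEnd {n : ℕ} (ε : Fin n → Bool) : ℤ := ∑ j, if ε j then 1 else -1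

lemma walkEnd_snoc {n : ℕ} (ε : Fin n → Bool) (b : Bool) :
    walkEnd (Fin.snoc ε b : Fin (n + 1) → Bool) = walkEnd ε + if b then 1 else -1 := by
  simp [walkEnd, Fin.sum_univ_castSucc]

def pathVec (a : ℕ → ℋ →L[ℂ] ℋ) (σ : Finset ℕ) : (n : ℕ) → (Fin n → Bool) → ℋ
  | 0, _ => Z σ
  | n + 1, ε => stepOp a n (ε (Fin.last n)) (pathVec a σ n (Fin.init ε))

section
variable {a : ℕ → ℋ →L[ℂ] ℋ} {σ : Finset ℕ}

lemma pathVec_snoc {n : ℕ} (ε : Fin n → Bool) (b : Bool) :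
    pathVec a σ (n + 1) (Fin.snoc ε b) = stepOp a n b (pathVec a σ n ε) := by
  simp [pathVec, Fin.init_snoc]

lemma seqJ_rhoPoint (n : ℕ) (x : ℤ) :
    seqJ a (rhoPoint σ) n x =
      ∑ ε with walkEnd ε = x, dyad (pathVec a σ n ε) (pathVec a σ n ε) := by
  induction n generalizing x with
  | zero =>
    rcases eq_or_ne x 0 with rfl | hx
    · simp [seqJ, rhoPoint, walkEnd, pathVec]
    · simp [seqJ, rhoPoint, walkEnd, hx, hx.symm]
  | succ n ih =>
    have hL : Lop a n = stepOp a n false := rfl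
    have hR : Rop a n = stepOp a n true := rfl
    simp only [seqJ, Jmap1, ih, hL, hR, Finset.sum_filter, Finset.mul_sum, Finset.sum_mul, mul_ite,
      ite_mul, mul_zero, zero_mul, stepOp_dyad, Fin.sum_univ_pi_snoc, Fintype.sum_bool,
      walkEnd_snoc, pathVec_snoc, Finset.sum_add_distrib, if_true, Bool.false_eq_true, if_false]
    rw [add_comm]
    congr 1 <;> refine Finset.sum_congr rfl fun ε _ => if_congr ?_ rfl rfl <;> omega

lemma pathVec_mem_tailSpan (ha : QBN a) :
    ∀ (n : ℕ) (ε : Fin n → Bool), pathVec a σ n ε ∈ tailSpan σ n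
  | 0, _ => Submodule.subset_span ⟨σ, fun _ _ => Iff.rfl, rfl⟩
  | n + 1, _ => stepOp_mem_tailSpan ha _ (pathVec_mem_tailSpan ha n _)

lemma norm_pathVec_sq (ha : QBN a) :
    ∀ (n : ℕ) (ε : Fin n → Bool), ‖pathVec a σ n ε‖ ^ 2 = 2⁻¹ ^ n
  | 0, _ => by simp [pathVec, ← coe_ZBasis, ZBasis.orthonormal.1 σ]
  | n + 1, ε => by
    rw [pathVec, norm_stepOp_sq ha _ (pathVec_mem_tailSpan ha n _), norm_pathVec_sq ha n, pow_succ]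
    ring

end

lemma HilbertBasis.hasSum_re_inner_dyad {ι E : Type} [NormedAddCommGroup E]
    [InnerProductSpace ℂ E] (b : HilbertBasis ι ℂ E) (u : E) :
    HasSum (fun i => (inner ℂ (b i) (dyad u u (b i))).re) (‖u‖ ^ 2) := by
  rw [← inner_self_eq_norm_sq (𝕜 := ℂ)]
  refine Complex.hasSum_re (b.hasSum_inner_mul_inner u u) |>.congr_fun fun i => ?_
  simp [dyad]

lemma trB_sum_dyad {ι κ E : Type} [NormedAddCommGroup E] [InnerProductSpace ℂ E]
    (b : HilbertBasis ι ℂ E) (s : Finset κ) (u : κ → E) :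
    trB b (∑ j ∈ s, dyad (u j) (u j)) = ∑ j ∈ s, ‖u j‖ ^ 2 := by
  refine Eq.trans ?_ (hasSum_sum fun j _ => b.hasSum_re_inner_dyad (u j)).tsum_eq
  simp [trB, sum_apply, Complex.re_sum]

lemma trH_seqJ_rhoPoint {a : ℕ → ℋ →L[ℂ] ℋ} (ha : QBN a) (σ : Finset ℕ) (n : ℕ) (x : ℤ) :
    trH (seqJ a (rhoPoint σ) n x) = ∑ ε : Fin n → Bool with walkEnd ε = x, (2⁻¹ : ℝ) ^ n := by
  rw [seqJ_rhoPoint, trH, ← coe_ZBasis, trB_sum_dyad]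
  exact Finset.sum_congr rfl fun ε _ => norm_pathVec_sq ha n ε

lemma tsum_mul_sum_filter {ι κ : Type*} [Fintype ι] [DecidableEq κ] (f : ι → κ) (c : κ → ℂ)
    (g : ι → ℂ) : ∑' x, c x * ∑ i with f i = x, g i = ∑ i, c (f i) * g i := by
  refine Eq.trans ?_ (hasSum_sum fun i _ => hasSum_ite_eq (f i) (c (f i) * g i)).tsum_eq
  refine tsum_congr fun x => ?_
  rw [Finset.sum_filter, Finset.mul_sum]
  refine Finset.sum_congr rfl fun i _ => ?_
  rcases eq_or_ne (f i) x with rfl | h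
  · simp
  · simp [h, h.symm]

open Complex in
lemma sum_exp_mul_walkEnd (s : ℂ) (n : ℕ) :
    ∑ ε : Fin n → Bool, exp (I * s * walkEnd ε) * 2⁻¹ ^ n = cos s ^ n := by
  have hcos : cos s = ∑ b : Bool, exp (I * s * (if b then 1 else -1 : ℤ)) * 2⁻¹ := by
    simp only [Fintype.sum_bool, if_true, Bool.false_eq_true, if_false, cos]
    push_cast
    ring_nf
  rw [hcos, Fintype.sum_pow]
  refine Finset.sum_congr rfl fun ε _ => ?_
  rw [Finset.prod_mul_distrib, ← exp_sum, Finset.prod_const, Finset.card_univ, Fintype.card_fin,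
    walkEnd, Int.cast_sum, Finset.mul_sum]

open Complex in
lemma tendsto_cos_div_sqrt_pow (t : ℂ) :
    Tendsto (fun n : ℕ => cos (t / √n) ^ n) atTop (nhds (exp (-t ^ 2 / 2))) := by
  suffices Tendsto (fun n : ℕ => n * (cos (t / √n) - 1)) atTop (nhds (-t ^ 2 / 2)) from
    (tendsto_one_add_pow_exp_of_tendsto this).congr fun n => by rw [add_sub_cancel]
  rw [tendsto_iff_norm_sub_tendsto_zero]
  refine squeeze_zero' (.of_forall fun n => norm_nonneg _) ?_
    (tendsto_const_div_atTop_nhds_zero_nat (‖t‖ ^ 4 * (5 / 96)))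
  filter_upwards [eventually_ge_atTop ⌈‖t‖ ^ 2⌉₊, eventually_ge_atTop 1] with n htn hn
  have hn0 : (0 : ℝ) < n := by exact_mod_cast hn
  have hnorm : ‖t / √n‖ ^ 2 = ‖t‖ ^ 2 / n := by
    rw [norm_div, norm_real, Real.norm_of_nonneg (Real.sqrt_nonneg _), div_pow,
      Real.sq_sqrt hn0.le]
  have hsmall : ‖t / √n‖ ≤ 1 := by
    rw [← sq_le_one_iff₀ (norm_nonneg _), hnorm, div_le_one hn0]
    exact Nat.ceil_le.mp htn
  have hsq : (n : ℂ) * (t / √n) ^ 2 = t ^ 2 := by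
    rw [div_pow, ← ofReal_pow, Real.sq_sqrt hn0.le, ofReal_natCast]
    exact mul_div_cancel₀ _ (by exact_mod_cast hn0.ne')
  calc ‖n * (cos (t / √n) - 1) - -t ^ 2 / 2‖
      = ‖(n : ℂ) * (cos (t / √n) - (1 - (t / √n) ^ 2 / 2))‖ := by
        congr 1
        rw [← hsq]
        ring
    _ ≤ n * (‖t / √n‖ ^ 4 * (5 / 96)) := by
        rw [norm_mul, Complex.norm_natCast]
        gcongr
        exact cos_bound hsmall
    _ = ‖t‖ ^ 4 * (5 / 96) / n := by
        rw [show ‖t / √n‖ ^ 4 = (‖t / √n‖ ^ 2) ^ 2 by ring, hnorm]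
        field_simp

/-- The 1-dimensional nucleus `ρ_σ` concentrated at the origin with value `|Z_σ⟩⟨Z_σ|`
is regular: `lim_n ∑_x e^{itx/√n} Tr[ρ⁽ⁿ⁾(x)] = e^{-t²/2}` for every real `t`. -/
theorem stmt15 (a : ℕ → ℋ →L[ℂ] ℋ) (ha : QBN a) (σ : Finset ℕ) :
    Regular a (rhoPoint σ) := by
  intro t
  suffices hchar : ∀ n : ℕ, ∑' x : ℤ, Complex.exp (Complex.I * t * x / √n) *
      (trH (seqJ a (rhoPoint σ) n x) : ℂ) = Complex.cos (t / √n) ^ n by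
    simpa only [hchar] using tendsto_cos_div_sqrt_pow t
  intro n
  simp only [trH_seqJ_rhoPoint ha, Complex.ofReal_sum, Complex.ofReal_pow, Complex.ofReal_inv,
    Complex.ofReal_ofNat]
  rw [tsum_mul_sum_filter, ← sum_exp_mul_walkEnd]
  congr! 3
  ring
end
end
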